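/- arXiv:2011.11089 — 2 statements merged into one kernel-verified Lean document; each statement's English description precedes it below -/
import Mathlib

section
/- The viscous coefficient matrix block K₁₁ of the symmetrized 2D compressible Navier-Stokes equations is symmetric positive semi-definite whenever v₄ < 0, μ ≥ 0, λ ≥ 0, γ > 1, Pr > 0. -/
/-! Up to the positive factor `-1 / v₄³`, `K₁₁` is the Gram-type sum
`(λ + 2μ) a aᵀ + μ b bᵀ + (γμ(-v₄)/Pr) e₄ e₄ᵀ` with `a = (0, v₄, 0, -v₂)` and `b = (0, 0, v₄, -v₃)`,
a nonnegative combination of rank-one positive semidefinite matrices. -/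

open Matrix

theorem Matrix.posSemidef_smul_vecMulVec_self {n R : Type*} [Fintype n] [CommRing R]
    [PartialOrder R] [StarRing R] [StarOrderedRing R] [TrivialStar R] {c : R} (hc : 0 ≤ c)
    (a : n → R) : (c • vecMulVec a a).PosSemidef := by
  simpa using (posSemidef_vecMulVec_self_star a).smul hc

theorem K11_numerator_eq_neg_sum_vecMulVec (v₂ v₃ v₄ μ lam γ Pr : ℝ) :
    Matrix.of
        ![![0, 0, 0, 0],
          ![0, -((lam + 2 * μ) * v₄ ^ 2), 0, (lam + 2 * μ) * v₂ * v₄],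
          ![0, 0, -(μ * v₄ ^ 2), μ * v₃ * v₄],
          ![0, (lam + 2 * μ) * v₂ * v₄, μ * v₃ * v₄,
            -((lam + 2 * μ) * v₂ ^ 2 + μ * v₃ ^ 2 - γ * μ * v₄ / Pr)]] =
      -((lam + 2 * μ) • vecMulVec ![0, v₄, 0, -v₂] ![0, v₄, 0, -v₂] +
          μ • vecMulVec ![0, 0, v₄, -v₃] ![0, 0, v₄, -v₃] +
          (γ * μ * -v₄ / Pr) • vecMulVec ![0, 0, 0, 1] ![0, 0, 0, 1]) := by
  ext i j
  fin_cases i <;> fin_cases j <;> simp [-mul_eq_mul_left_iff, -mul_eq_mul_right_iff] <;> ring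

theorem K11_symm_posSemidef (v₂ v₃ v₄ μ lam γ Pr : ℝ)
    (hv₄ : v₄ < 0) (hμ : 0 ≤ μ) (hlam : 0 ≤ lam) (hγ : 1 < γ) (hPr : 0 < Pr) :
    let K₁₁ : Matrix (Fin 4) (Fin 4) ℝ :=
      (1 / v₄ ^ 3) •
        Matrix.of
          ![![0, 0, 0, 0],
            ![0, -((lam + 2 * μ) * v₄ ^ 2), 0, (lam + 2 * μ) * v₂ * v₄],
            ![0, 0, -(μ * v₄ ^ 2), μ * v₃ * v₄],
            ![0, (lam + 2 * μ) * v₂ * v₄, μ * v₃ * v₄,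
              -((lam + 2 * μ) * v₂ ^ 2 + μ * v₃ ^ 2 - γ * μ * v₄ / Pr)]]
    K₁₁.IsSymm ∧ K₁₁.PosSemidef := by
  intro K₁₁
  have hscale : 0 ≤ -(1 / v₄ ^ 3) := by
    rw [neg_nonneg, one_div_nonpos]
    exact (Odd.pow_neg (by decide) hv₄).le
  have hheat : 0 ≤ γ * μ * -v₄ / Pr :=
    div_nonneg (mul_nonneg (mul_nonneg (by linarith) hμ) (by linarith)) hPr.le
  have hK : K₁₁.PosSemidef := by
    simp only [K₁₁, K11_numerator_eq_neg_sum_vecMulVec, smul_neg, ← neg_smul]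
    refine .smul (.add (.add ?_ ?_) ?_) hscale <;> apply posSemidef_smul_vecMulVec_self
    exacts [by linarith, hμ, hheat]
  exact ⟨isHermitian_iff_isSymm.1 hK.isHermitian, hK⟩
end

section
/- Adiabatic no-slip boundary term cancellation: with exterior states v₂⁺ = -2u₁v₄ - v₂, v₃⁺ = -2u₂v₄ - v₃, v₄⁺ = v₄, σ₂⁺ = σ₂, σ₃⁺ = σ₃, σ₄⁺ = 2(u₁σ₂ + u₂σ₃ + c_v g/v₄) - σ₄, the pointwise boundary flux combination (1/2)(v⁺ - v)·σ n + {σ}n · v equals c_v g, where v = (v₂,v₃,v₄), σ = (σ₂,σ₃,σ₄), n ∈ ℝ is a scalar normal component with n² = 1 (1D interface), u₁,u₂ wall velocities and g the heat entropy flow. -/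
theorem adiabatic_noslip_boundary_term (v₂ v₃ v₄ σ₂ σ₃ σ₄ u₁ u₂ g c_v n : ℝ)
    (hv₄ : v₄ ≠ 0) (hn : n ^ 2 = 1)
    (v₂p v₃p v₄p σ₂p σ₃p σ₄p : ℝ)
    (hv₂p : v₂p = -2 * u₁ * v₄ - v₂)
    (hv₃p : v₃p = -2 * u₂ * v₄ - v₃)
    (hv₄p : v₄p = v₄)
    (hσ₂p : σ₂p = σ₂) (hσ₃p : σ₃p = σ₃)
    (hσ₄p : σ₄p = 2 * (u₁ * σ₂ + u₂ * σ₃ + c_v * g * n / v₄) - σ₄) :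
    (1 / 2) * ((v₂p - v₂) * σ₂ + (v₃p - v₃) * σ₃ + (v₄p - v₄) * σ₄) * n +
      ((σ₂p + σ₂) / 2 * v₂ + (σ₃p + σ₃) / 2 * v₃ + (σ₄p + σ₄) / 2 * v₄) * n
      = c_v * g := by
  -- The wall-velocity terms of `v⁺ ⬝ σ` and `σ⁺ ⬝ v` cancel; only the heat flux survives.
  have cross_sum : v₂p * σ₂ + v₃p * σ₃ + v₄p * σ₄ + (σ₂p * v₂ + σ₃p * v₃ + σ₄p * v₄)
      = 2 * c_v * g * n := by
    subst hv₂p hv₃p hv₄p hσ₂p hσ₃p hσ₄p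
    field_simp
    ring
  calc _ = (v₂p * σ₂ + v₃p * σ₃ + v₄p * σ₄ + (σ₂p * v₂ + σ₃p * v₃ + σ₄p * v₄)) / 2 * n := by
        ring
    _ = c_v * g * n ^ 2 := by rw [cross_sum]; ring
    _ = c_v * g := by rw [hn, mul_one]
end
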